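/- For a connected graph G, β'(G) = n(G) if and only if every vertex of G is a twin vertex, where n(G) is the order of G. -/

import Mathlib

open SimpleGraph

variable {V : Type*}

/-- `S` is a resolving set of `G`. -/
def ResSet (G : SimpleGraph V) (S : Set V) : Prop :=
  ∀ x y : V, x ≠ y → ∃ w ∈ S, G.dist x w ≠ G.dist y w

/-- `S` is a fault-tolerant resolving set of `G`. -/
def FTResSet (G : SimpleGraph V) (S : Set V) : Prop :=
  ResSet G S ∧ ∀ x ∈ S, ResSet G (S \ {x})

/-- Metric dimension. -/
noncomputable def md (G : SimpleGraph V) : ℕ :=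
  sInf {n | ∃ S : Set V, S.ncard = n ∧ ResSet G S}

/-- Fault-tolerant metric dimension. -/
noncomputable def ftmd (G : SimpleGraph V) : ℕ :=
  sInf {n | ∃ S : Set V, S.ncard = n ∧ FTResSet G S}

/-- `u` and `v` are twins: distinct and with equal open or equal closed neighborhoods. -/
def IsTwinPair (G : SimpleGraph V) (u v : V) : Prop :=
  u ≠ v ∧ (G.neighborSet u = G.neighborSet v ∨
    G.neighborSet u ∪ {u} = G.neighborSet v ∪ {v})

/-- `u` is a twin vertex. -/
def IsTwin (G : SimpleGraph V) (u : V) : Prop := ∃ v, IsTwinPair G u v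

/-!
Twins `u`, `v` are at the same distance from every third vertex, so a resolving set contains
one of them and a fault-tolerant one (which stays resolving after deleting either) contains both;
if every vertex is a twin, `V` is therefore the only fault-tolerant resolving set. Conversely, if
`u` is not a twin then for every `x ≠ u` some third vertex distinguishes `u` from `x` (otherwise
`u` and `x` would have the same neighbours outside `{u, x}` and be twins), so `V ∖ {u}` is
fault-tolerant resolving.
-/

namespace IsTwinPair

variable {G : SimpleGraph V} {u v w : V}

lemma symm (h : IsTwinPair G u v) : IsTwinPair G v u := by
  obtain ⟨huv, hN | hN⟩ := h
  exacts [⟨huv.symm, Or.inl hN.symm⟩, ⟨huv.symm, Or.inr hN.symm⟩]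

lemma adj_of_adj (h : IsTwinPair G u v) (hwv : w ≠ v) (ha : G.Adj u w) : G.Adj v w := by
  obtain ⟨-, hN | hN⟩ := h
  · exact (hN ▸ ha : w ∈ G.neighborSet v)
  · have hw : w ∈ G.neighborSet v ∪ {v} := hN ▸ Or.inl ha
    exact hw.resolve_right hwv

lemma dist_le (hG : G.Connected) (h : IsTwinPair G u v) (hwu : w ≠ u) (hwv : w ≠ v) :
    G.dist v w ≤ G.dist u w := by
  obtain ⟨p, hp⟩ := hG.exists_walk_length_eq_dist u w
  cases p with
  | nil => exact absurd rfl hwu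
  | @cons _ a _ ha q =>
    have hq : q.length + 1 = G.dist u w := by simpa using hp
    by_cases hav : a = v
    · subst hav
      have := SimpleGraph.dist_le q
      omega
    · calc G.dist v w ≤ (Walk.cons (h.adj_of_adj hav ha) q).length := SimpleGraph.dist_le _
        _ = G.dist u w := by simpa using hq

lemma dist_eq (hG : G.Connected) (h : IsTwinPair G u v) (hwu : w ≠ u) (hwv : w ≠ v) :
    G.dist u w = G.dist v w :=
  le_antisymm (h.symm.dist_le hG hwv hwu) (h.dist_le hG hwu hwv)

end IsTwinPair

lemma isTwinPair_of_forall_adj_iff {G : SimpleGraph V} {u x : V} (hux : u ≠ x)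
    (h : ∀ w, w ≠ u → w ≠ x → (G.Adj u w ↔ G.Adj x w)) : IsTwinPair G u x := by
  refine ⟨hux, ?_⟩
  by_cases hadj : G.Adj u x
  · right
    ext w
    by_cases hwu : w = u
    · subst hwu; simp [hadj.symm]
    by_cases hwx : w = x
    · subst hwx; simp [hadj]
    · simp [hwu, hwx, h w hwu hwx]
  · left
    ext w
    by_cases hwu : w = u
    · subst hwu; simpa [adj_comm] using hadj
    by_cases hwx : w = x
    · subst hwx; simpa using hadj
    · exact h w hwu hwx

lemma exists_dist_ne_of_not_isTwin {G : SimpleGraph V} {u x : V} (hu : ¬IsTwin G u)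
    (hx : x ≠ u) : ∃ w, w ≠ u ∧ w ≠ x ∧ G.dist u w ≠ G.dist x w := by
  by_contra! hc
  refine hu ⟨x, isTwinPair_of_forall_adj_iff hx.symm fun w hwu hwx => ?_⟩
  rw [← dist_eq_one_iff_adj, ← dist_eq_one_iff_adj, hc w hwu hwx]

section ResSet

variable {G : SimpleGraph V} {S : Set V}

lemma dist_self_ne_dist (hG : G.Connected) {x y : V} (hxy : x ≠ y) :
    G.dist x x ≠ G.dist y x := by
  rw [dist_self]
  exact (hG.pos_dist_of_ne hxy.symm).ne

/-- In a connected graph a vertex of `S` resolves every pair it belongs to, so only pairs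
outside `S` need checking. -/
lemma resSet_of_forall_notMem (hG : G.Connected)
    (h : ∀ x y, x ≠ y → x ∉ S → y ∉ S → ∃ w ∈ S, G.dist x w ≠ G.dist y w) : ResSet G S := by
  intro x y hxy
  by_cases hx : x ∈ S
  · exact ⟨x, hx, dist_self_ne_dist hG hxy⟩
  by_cases hy : y ∈ S
  · exact ⟨y, hy, (dist_self_ne_dist hG hxy.symm).symm⟩
  exact h x y hxy hx hy

lemma resSet_of_subsingleton_compl (hG : G.Connected) (hS : Sᶜ.Subsingleton) : ResSet G S :=
  resSet_of_forall_notMem hG fun _ _ hxy hx hy => absurd (hS hx hy) hxy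

lemma ResSet.mem_or_mem_of_isTwinPair (hG : G.Connected) (hS : ResSet G S) {u v : V}
    (h : IsTwinPair G u v) : u ∈ S ∨ v ∈ S := by
  obtain ⟨w, hwS, hw⟩ := hS u v h.1
  by_cases hwu : w = u
  · exact Or.inl (hwu ▸ hwS)
  by_cases hwv : w = v
  · exact Or.inr (hwv ▸ hwS)
  exact absurd (h.dist_eq hG hwu hwv) hw

lemma FTResSet.mem_of_isTwinPair (hG : G.Connected) (hS : FTResSet G S) {u v : V}
    (h : IsTwinPair G u v) : u ∈ S := by
  by_contra hu
  have hv : v ∈ S := (hS.1.mem_or_mem_of_isTwinPair hG h).resolve_left hu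
  rcases (hS.2 v hv).mem_or_mem_of_isTwinPair hG h with hu' | hv'
  exacts [hu hu'.1, hv'.2 rfl]

lemma ftResSet_univ (hG : G.Connected) : FTResSet G Set.univ :=
  ⟨resSet_of_subsingleton_compl hG (by simp), fun x _ =>
    resSet_of_subsingleton_compl hG (by simp [Set.compl_sdiff])⟩

lemma ftResSet_compl_singleton (hG : G.Connected) {u : V} (hu : ¬IsTwin G u) :
    FTResSet G {u}ᶜ := by
  refine ⟨resSet_of_subsingleton_compl hG (by simp), fun x hx => ?_⟩
  rw [Set.mem_compl_singleton_iff] at hx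
  refine resSet_of_forall_notMem hG fun a b hab ha hb => ?_
  simp only [Set.mem_sdiff, Set.mem_compl_singleton_iff, Set.mem_singleton_iff, not_and,
    not_not] at ha hb ⊢
  obtain ⟨w, hwu, hwx, hw⟩ := exists_dist_ne_of_not_isTwin hu hx
  by_cases hau : a = u
  · subst hau
    obtain rfl : b = x := hb (Ne.symm hab)
    exact ⟨w, ⟨hwu, hwx⟩, hw⟩
  · obtain rfl : a = x := ha hau
    obtain rfl : b = u := by_contra fun hbu => hab (hb hbu).symm
    exact ⟨w, ⟨hwu, hwx⟩, Ne.symm hw⟩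

end ResSet

lemma ftmd_le_ncard {G : SimpleGraph V} {S : Set V} (hS : FTResSet G S) : ftmd G ≤ S.ncard :=
  Nat.sInf_le ⟨S, rfl, hS⟩

lemma exists_ftResSet_ncard_eq_ftmd {G : SimpleGraph V} (hG : G.Connected) :
    ∃ S : Set V, S.ncard = ftmd G ∧ FTResSet G S := by
  unfold ftmd
  apply Nat.sInf_mem (s := {n | ∃ S : Set V, S.ncard = n ∧ FTResSet G S})
  exact ⟨_, Set.univ, rfl, ftResSet_univ hG⟩

theorem ftmd_eq_order_iff [Fintype V] (G : SimpleGraph V) (hG : G.Connected) :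
    ftmd G = Fintype.card V ↔ ∀ u : V, IsTwin G u := by
  constructor
  · intro h u
    by_contra hu
    have hle := ftmd_le_ncard (ftResSet_compl_singleton hG hu)
    rw [Set.ncard_compl, Set.ncard_singleton, Nat.card_eq_fintype_card] at hle
    have hpos : 0 < Fintype.card V := Fintype.card_pos_iff.mpr hG.nonempty
    omega
  · intro h
    obtain ⟨S, hcard, hS⟩ := exists_ftResSet_ncard_eq_ftmd hG
    have hSuniv : S = Set.univ :=
      Set.eq_univ_of_forall fun u => hS.mem_of_isTwinPair hG (h u).choose_spec
    rw [← hcard, hSuniv, Set.ncard_univ, Nat.card_eq_fintype_card]
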